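/- arXiv:1301.3303 — 3 statements merged into one kernel-verified Lean document; each statement's English description precedes it below -/
import Mathlib

section
/- For every odd prime p, ∑_{k=0}^{p-1} binom(2k,k)^2 · binom(2(p-1-k), p-1-k)^2 ≡ 1 (mod p). -/
/-!
Modulo `p = 2m + 1` only the middle term `k = m` survives: for every other `k` one of `k`,
`p - 1 - k` is some `n < p` with `p ≤ 2n`, and then `p ∣ (2n).choose n`. The middle term is
`((p - 1).choose m)⁴`, and `(p - 1).choose m ≡ (-1)^m`.
-/

namespace Nat.Prime

variable {p : ℕ}

theorem dvd_choose_two_mul_self (hp : p.Prime) {n : ℕ} (hn : n < p) (h : p ≤ 2 * n) :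
    p ∣ (2 * n).choose n :=
  hp.dvd_choose hn (by omega) h

/-- Pascal's rule `(p-1).choose k + (p-1).choose (k+1) = p.choose (k+1) ≡ 0` flips the sign. -/
theorem cast_choose_sub_one {R : Type*} [Ring R] [CharP R p] (hp : p.Prime) {k : ℕ}
    (hk : k < p) : ((p - 1).choose k : R) = (-1) ^ k := by
  induction k with
  | zero => simp
  | succ k ih =>
    have hpascal : (p - 1).choose k + (p - 1).choose (k + 1) = p.choose (k + 1) := by
      conv_rhs => rw [← Nat.sub_one_add_one hp.ne_zero]
      exact (Nat.choose_succ_succ' _ _).symm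
    have hzero : (p.choose (k + 1) : R) = 0 :=
      (CharP.cast_eq_zero_iff R p _).2 (hp.dvd_choose_self k.succ_ne_zero hk)
    rw [← hpascal, Nat.cast_add, ih (by omega)] at hzero
    rw [pow_succ, mul_neg_one, eq_neg_iff_add_eq_zero, add_comm, hzero]

end Nat.Prime

/-- For every odd prime `p`,
`∑_{k=0}^{p-1} binom(2k,k)^2 · binom(2(p-1-k), p-1-k)^2 ≡ 1 (mod p)`. -/
theorem sum_central_binom_squares_cong_one (p : ℕ) (hp : p.Prime) (hp2 : 2 < p) :
    (∑ k ∈ Finset.range p,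
      (Nat.choose (2 * k) k) ^ 2 * (Nat.choose (2 * (p - 1 - k)) (p - 1 - k)) ^ 2)
      ≡ 1 [MOD p] := by
  obtain ⟨m, hm⟩ := hp.odd_of_ne_two hp2.ne'
  have hvanish (n : ℕ) (hn : n < p) (h : p ≤ 2 * n) : ((2 * n).choose n : ZMod p) = 0 :=
    (ZMod.natCast_eq_zero_iff _ _).2 (hp.dvd_choose_two_mul_self hn h)
  have hmiddle : ((2 * m).choose m : ZMod p) ^ 2 = 1 := by
    rw [show 2 * m = p - 1 by omega, hp.cast_choose_sub_one (by omega), ← pow_mul, mul_comm,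
      pow_mul, neg_one_sq, one_pow]
  rw [← ZMod.natCast_eq_natCast_iff]
  push_cast
  rw [Finset.sum_eq_single_of_mem m (Finset.mem_range.2 (by omega))]
  · rw [show p - 1 - m = m by omega, hmiddle, one_mul]
  · intro k hk hkm
    rcases Nat.lt_or_gt_of_ne hkm with hlt | hgt
    · rw [hvanish (p - 1 - k) (by omega) (by omega)]
      ring
    · rw [hvanish k (Finset.mem_range.1 hk) (by omega)]
      ring
end

section
/- Let p be an odd prime and let b_n, A_n, c_n ∈ Z for n ≥ 1 with A_1 = 1. Define formal power series t(q) = ∑_{n≥1} A_n q^n, and suppose that ∑_{n≥1} c_n q^{n-1} equals the formal derivative with respect to q of ∑_{n≥1} (b_n/n) t(q)^n (as power series with p-integral coefficients, i.e., the substitution ∑ b_n t^{n-1} dt = ∑ c_n q^{n-1} dq holds formally). Then b_p ≡ c_p (mod p). -/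
open PowerSeries

/-!
Write `d n` for the coefficient of `q^(p-1)` in `t^n t'`, so that `c_p = ∑_{n ≤ p} b_(n+1) d n`.
Since `t^n t' = (t^(n+1))' / (n+1)`, we have `(n+1) d n = p · [q^p] t^(n+1)`. Hence `p ∣ d n`
whenever `p ∤ n+1`, which for `n ≤ p` leaves only `n = p-1`; there `d (p-1) = [q^p] t^p = A_1^p = 1`.
-/

namespace PowerSeries

variable {R : Type*} [CommSemiring R]

theorem coeff_pow_self_of_constantCoeff_eq_zero {f : R⟦X⟧} (hf : constantCoeff f = 0) (n : ℕ) :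
    coeff n (f ^ n) = coeff 1 f ^ n := by
  obtain ⟨g, rfl⟩ := X_dvd_iff.mpr hf
  simpa [mul_pow] using coeff_X_pow_mul (g ^ n) n 0

theorem natCast_mul_coeff_pow_mul_derivative (f : R⟦X⟧) (n m : ℕ) :
    ((n + 1 : ℕ) : R) * coeff m (f ^ n * d⁄dX R f) =
      ((m + 1 : ℕ) : R) * coeff (m + 1) (f ^ (n + 1)) := by
  have h := congrArg (coeff m) (Derivation.leibniz_pow (d⁄dX R) f (n + 1))
  rw [coeff_derivative, Nat.add_sub_cancel, smul_eq_mul, map_nsmul, nsmul_eq_mul] at h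
  rw [mul_comm _ (coeff (m + 1) _), Nat.cast_succ m, h]

end PowerSeries

theorem Int.sum_mul_modEq_of_dvd {ι : Type*} [DecidableEq ι] {s : Finset ι} {k : ι} (hk : k ∈ s)
    {n : ℤ} (b d : ι → ℤ) (hdk : d k ≡ 1 [ZMOD n]) (hd : ∀ i ∈ s, i ≠ k → n ∣ d i) :
    ∑ i ∈ s, b i * d i ≡ b k [ZMOD n] := by
  rw [← Finset.add_sum_erase s _ hk]
  have hrest : ∑ i ∈ s.erase k, b i * d i ≡ 0 [ZMOD n] :=
    Int.modEq_zero_iff_dvd.mpr <| Finset.dvd_sum fun i hi =>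
      (hd i (Finset.mem_of_mem_erase hi) (Finset.ne_of_mem_erase hi)).mul_left _
  simpa using (hdk.mul_left (b k)).add hrest

theorem Int.dvd_of_natCast_mul_eq_prime_mul {p k : ℕ} (hp : p.Prime) (hk : ¬p ∣ k) {x y : ℤ}
    (h : (k : ℤ) * x = p * y) : (p : ℤ) ∣ x :=
  ((Nat.prime_iff_prime_int.mp hp).dvd_or_dvd (h ▸ dvd_mul_right _ _)).resolve_left
    (Int.natCast_dvd_natCast.not.mpr hk)

theorem Nat.Prime.not_dvd_succ_of_le_succ {p n : ℕ} (hp : p.Prime) (hn : n ≤ p) (hne : n + 1 ≠ p) :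
    ¬p ∣ n + 1 := fun h =>
  hne (Nat.eq_of_dvd_of_lt_two_mul n.succ_ne_zero h (by have := hp.two_le; omega))

theorem beukers_lemma_general (p : ℕ) (hp : p.Prime)
    (b A c : ℕ → ℤ) (hA1 : A 1 = 1)
    (t : PowerSeries ℤ) (ht : t = PowerSeries.mk fun n => if n = 0 then 0 else A n)
    (hpull : ∀ m : ℕ, c (m + 1) =
      PowerSeries.coeff m
        ((∑ n ∈ Finset.range (m + 2), PowerSeries.C (b (n + 1)) * t ^ n) *
          PowerSeries.derivative ℤ t)) :
    b p ≡ c p [ZMOD p] := by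
  obtain ⟨m, rfl⟩ := Nat.exists_eq_add_one_of_ne_zero hp.ne_zero
  set d : ℕ → ℤ := fun n => coeff m (t ^ n * d⁄dX ℤ t) with hd
  have hc : c (m + 1) = ∑ n ∈ Finset.range (m + 2), b (n + 1) * d n := by
    simp only [hpull m, Finset.sum_mul, map_sum, mul_assoc, coeff_C_mul, hd]
  have hkey (n : ℕ) : ((n + 1 : ℕ) : ℤ) * d n = ((m + 1 : ℕ) : ℤ) * coeff (m + 1) (t ^ (n + 1)) :=
    natCast_mul_coeff_pow_mul_derivative t n m
  have hlead : coeff (m + 1) (t ^ (m + 1)) = 1 := by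
    rw [coeff_pow_self_of_constantCoeff_eq_zero (by simp [ht])]
    simp [ht, hA1]
  have hdm : d m = 1 := by
    refine mul_left_cancel₀ (Nat.cast_ne_zero.mpr hp.ne_zero) ?_
    rw [hkey m, hlead]
  have hdvd (n : ℕ) (hn : n ∈ Finset.range (m + 2)) (hnm : n ≠ m) : ((m + 1 : ℕ) : ℤ) ∣ d n :=
    Int.dvd_of_natCast_mul_eq_prime_mul hp
      (hp.not_dvd_succ_of_le_succ (Nat.lt_succ_iff.mp (Finset.mem_range.mp hn)) (by omega))
      (hkey n)
  rw [hc]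
  exact (Int.sum_mul_modEq_of_dvd (Finset.mem_range.mpr (by omega)) (fun n => b (n + 1)) d
    (by rw [hdm]) hdvd).symm

/-- Beukers' lemma (Lemma `cor:Beukers` of the paper): if
`ω(t) = ∑_{n≥1} b_n t^{n-1} dt` pulls back along `t(q) = ∑_{n≥1} A_n q^n`
(with `A_1 = 1`) to `∑_{n≥1} c_n q^{n-1} dq`, then `b_p ≡ c_p (mod p)`.
The pullback relation `(∑_{n≥1} b_n t(q)^{n-1}) · t'(q) = ∑_{n≥1} c_n q^{n-1}`
is stated coefficientwise; since `t(q)` has zero constant term, only powers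
`t(q)^n` with `n ≤ m+1` contribute to the coefficient of `q^m`. -/
theorem beukers_lemma (p : ℕ) (hp : p.Prime) (hp2 : 2 < p)
    (b A c : ℕ → ℤ) (hA1 : A 1 = 1)
    (t : PowerSeries ℤ) (ht : t = PowerSeries.mk fun n => if n = 0 then 0 else A n)
    (hpull : ∀ m : ℕ, c (m + 1) =
      PowerSeries.coeff m
        ((∑ n ∈ Finset.range (m + 2), PowerSeries.C (b (n + 1)) * t ^ n) *
          PowerSeries.derivative ℤ t)) :
    b p ≡ c p [ZMOD p] :=
  beukers_lemma_general p hp b A c hA1 t ht hpull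
end

section
/- Define A_3(n) = ∑_{i+j+k=n, i,j,k≥0} binom(2i,i)^2 binom(2j,j)^2 binom(2k,k)^2. For every prime p ≡ 3 (mod 4), A_3(p-1) ≡ 0 (mod p). -/
/-!
Write `p = 2r + 1`. Modulo `p` one has `binom(2m, m) ≡ (-4)^m binom(r, m)` for `m < p`
(compare `(m + 1) binom(2m + 2, m + 1) = 2(2m + 1) binom(2m, m)` with `2(2m + 1) ≡ -4(r - m)`),
so `A₃(p - 1) ≡ 16^(p-1) [t^(p-1)] H(t)^3 = [t^(p-1)] H(t)^3` with `H(t) = ∑ₖ binom(r, k)^2 t^k`.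
As `deg H^3 = 3r < 2(p - 1)`, only the monomial `t^(p-1)` survives in `∑_{t ∈ 𝔽_p} H(t)^3`,
which is therefore `-[t^(p-1)] H(t)^3`. On the other hand Vandermonde's identity together with
`binom(p - 1 - a, b) ≡ (-1)^b binom(a + b, b)` gives `H(1 - t) = (-1)^r H(t)` over `𝔽_p`; for
`p ≡ 3 (mod 4)` the integer `r` is odd, so the substitution `t ↦ 1 - t` shows that
`∑_{t ∈ 𝔽_p} H(t)^3` equals its own negative, hence vanishes.
-/

/-- `A_3(n) = ∑_{i+j+k=n} binom(2i,i)^2 binom(2j,j)^2 binom(2k,k)^2`. -/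
def A₃ (n : ℕ) : ℕ :=
  ∑ x ∈ Finset.Nat.antidiagonalTuple 3 n, ∏ j, (Nat.choose (2 * x j) (x j)) ^ 2

open Finset Polynomial

namespace FiniteField

variable {K : Type*} [Field K] [Fintype K]

theorem sum_pow_of_lt_two_mul {i : ℕ} (hi : i < 2 * (Fintype.card K - 1)) :
    ∑ x : K, x ^ i = if i = Fintype.card K - 1 then -1 else 0 := by
  classical
  rcases Nat.eq_zero_or_pos i with rfl | hi0
  · have : Fintype.card K - 1 ≠ 0 := by omega
    simp [Ne.symm this]
  rw [Fintype.sum_eq_add_sum_subtype_ne _ 0, zero_pow hi0.ne', zero_add,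
    ← unitsEquivNeZero.sum_comp]
  simp only [unitsEquivNeZero_apply_coe]
  rw [sum_pow_units]
  exact if_congr ⟨fun h => Nat.eq_of_dvd_of_lt_two_mul hi0.ne' h hi, fun h => h ▸ dvd_rfl⟩
    rfl rfl

theorem sum_eval_eq_neg_coeff (f : K[X]) (hf : f.natDegree < 2 * (Fintype.card K - 1)) :
    ∑ x, f.eval x = -f.coeff (Fintype.card K - 1) := by
  simp_rw [eval_eq_sum_range' hf, sum_comm (s := univ), ← mul_sum]
  rw [sum_congr rfl fun i hi => by rw [sum_pow_of_lt_two_mul (mem_range.1 hi)]]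
  simp only [mul_ite, mul_neg, mul_one, mul_zero, sum_ite_eq', mem_range]
  rw [if_pos (by omega)]

end FiniteField

theorem Finset.Nat.sum_antidiagonalTuple_eq_sum_finsuppAntidiag {M : Type*} [AddCommMonoid M]
    (k n : ℕ) (g : (Fin k → ℕ) → M) :
    ∑ x ∈ antidiagonalTuple k n, g x = ∑ l ∈ finsuppAntidiag univ n, g l :=
  sum_nbij' Finsupp.equivFunOnFinite.symm (⇑) (by simp [Nat.mem_antidiagonalTuple])
    (by simp [Nat.mem_antidiagonalTuple]) (by simp) (by simp) (by simp)

theorem Polynomial.coeff_pow_eq_sum_antidiagonalTuple {R : Type*} [CommSemiring R] (f : R[X])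
    (k n : ℕ) : (f ^ k).coeff n = ∑ x ∈ Nat.antidiagonalTuple k n, ∏ j, f.coeff (x j) := by
  classical
  rw [Nat.sum_antidiagonalTuple_eq_sum_finsuppAntidiag, ← coeff_coe, coe_pow, ← Fin.prod_const,
    PowerSeries.coeff_prod]
  simp [coeff_coe]

theorem Nat.sum_range_choose_sq_mul_choose {r j : ℕ} (hj : j ≤ r) :
    ∑ k ∈ range (r + 1), r.choose k ^ 2 * k.choose j =
      r.choose j * (2 * r - j).choose (r - j) := by
  have hshift : ∑ k ∈ range (r + 1), r.choose k ^ 2 * k.choose j =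
      ∑ a ∈ range (r - j + 1), r.choose (j + a) ^ 2 * (j + a).choose j := by
    rw [show r + 1 = j + (r - j + 1) by omega, sum_range_add,
      sum_eq_zero fun k hk => by rw [choose_eq_zero_of_lt (mem_range.1 hk), mul_zero], zero_add]
  rw [hshift, show 2 * r - j = (r - j) + r by omega, add_choose_eq,
    Nat.sum_antidiagonal_eq_sum_range_succ_mk, mul_sum]
  refine sum_congr rfl fun a ha => ?_
  have ha : j + a ≤ r := by rw [mem_range] at ha; omega
  rw [sq, mul_assoc, choose_mul (le_add_right j a), add_tsub_cancel_left, ← choose_symm ha,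
    show r - (j + a) = r - j - a by omega]
  ring

theorem one_sub_pow_eq_sum_range {R : Type*} [CommRing R] {k n : ℕ} (hk : k < n) (t : R) :
    (1 - t) ^ k = ∑ j ∈ range n, (k.choose j : R) * (-t) ^ j := by
  have hdeg : ((X + 1 : R[X]) ^ k).natDegree < n :=
    (natDegree_pow_le_of_le k (show (X + 1 : R[X]).natDegree ≤ 1 by compute_degree)).trans_lt
      (by omega)
  simpa [coeff_X_add_one_pow, sub_eq_neg_add] using eval_eq_sum_range' hdeg (-t)

namespace ZMod

variable {p : ℕ} [Fact p.Prime]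

theorem natCast_ne_zero_of_pos_of_lt {m : ℕ} (h0 : 0 < m) (hm : m < p) : (m : ZMod p) ≠ 0 := by
  rw [Ne, natCast_eq_zero_iff]
  exact Nat.not_dvd_of_pos_of_lt h0 hm

theorem natCast_choose_sub_one_sub {a b : ℕ} (hab : a + b < p) :
    ((p - 1 - a).choose b : ZMod p) = (-1) ^ b * ((a + b).choose b : ZMod p) := by
  induction b with
  | zero => simp
  | succ b ih =>
    apply mul_left_cancel₀ (natCast_ne_zero_of_pos_of_lt (m := b + 1) (by omega) (by omega))
    have hsub : ((p - 1 - a - b : ℕ) : ZMod p) = -((a + b + 1 : ℕ) : ZMod p) := by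
      rw [eq_neg_iff_add_eq_zero, ← Nat.cast_add, show p - 1 - a - b + (a + b + 1) = p by omega,
        natCast_self]
    have h1 := congrArg (Nat.cast (R := ZMod p)) (Nat.choose_succ_right_eq (p - 1 - a) b)
    have h2 := congrArg (Nat.cast (R := ZMod p)) (Nat.add_one_mul_choose_eq (a + b) b)
    push_cast at h1 h2 hsub ⊢
    rw [← add_assoc]
    linear_combination h1 + ((p - 1 - a).choose b : ZMod p) * hsub -
      ((a : ZMod p) + b + 1) * ih (by omega) - (-1 : ZMod p) ^ b * h2

theorem natCast_centralBinom {r : ℕ} (hpr : p = 2 * r + 1) {m : ℕ} (hm : m < p) :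
    (m.centralBinom : ZMod p) = (-4) ^ m * r.choose m := by
  induction m with
  | zero => simp
  | succ m ih =>
    apply mul_left_cancel₀ (natCast_ne_zero_of_pos_of_lt (m := m + 1) (by omega) hm)
    have hstep : (2 * (2 * m + 1) : ZMod p) * r.choose m =
        -4 * ((r - m : ℕ) : ZMod p) * r.choose m := by
      rcases le_or_gt m r with h | h
      · have hp : ((2 * r + 1 : ℕ) : ZMod p) = 0 := hpr ▸ natCast_self p
        push_cast [Nat.cast_sub h] at hp ⊢
        linear_combination (2 * r.choose m : ZMod p) * hp
      · simp [Nat.choose_eq_zero_of_lt h]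
    have h1 := congrArg (Nat.cast (R := ZMod p)) (Nat.succ_mul_centralBinom_succ m)
    have h2 := congrArg (Nat.cast (R := ZMod p)) (Nat.choose_succ_right_eq r m)
    push_cast at h1 h2 hstep ⊢
    rw [h1, ih (by omega)]
    linear_combination (-4 : ZMod p) ^ m * hstep - (-4 : ZMod p) ^ (m + 1) * h2

end ZMod

noncomputable def chooseSqPoly (R : Type*) [CommSemiring R] (r : ℕ) : R[X] :=
  ∑ k ∈ range (r + 1), C ((r.choose k : R) ^ 2) * X ^ k

section

variable {R : Type*} [CommSemiring R]

theorem coeff_chooseSqPoly (r k : ℕ) : (chooseSqPoly R r).coeff k = (r.choose k : R) ^ 2 := by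
  simp only [chooseSqPoly, finsetSum_coeff, coeff_C_mul_X_pow, sum_ite_eq, mem_range]
  split_ifs with h
  · rfl
  · rw [Nat.choose_eq_zero_of_lt (by omega)]; simp

theorem natDegree_chooseSqPoly_le (r : ℕ) : (chooseSqPoly R r).natDegree ≤ r :=
  natDegree_sum_le_of_forall_le _ _ fun k hk =>
    (natDegree_C_mul_X_pow_le _ k).trans (Nat.lt_succ_iff.1 (mem_range.1 hk))

theorem eval_chooseSqPoly (r : ℕ) (t : R) :
    (chooseSqPoly R r).eval t = ∑ k ∈ range (r + 1), (r.choose k : R) ^ 2 * t ^ k := by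
  simp [chooseSqPoly, eval_finsetSum]

end

section

variable {p r : ℕ} [Fact p.Prime]

theorem eval_one_sub_chooseSqPoly (hpr : p = 2 * r + 1) (t : ZMod p) :
    (chooseSqPoly (ZMod p) r).eval (1 - t) = (-1) ^ r * (chooseSqPoly (ZMod p) r).eval t := by
  have hcoeff : ∀ j ∈ range (r + 1),
      ∑ k ∈ range (r + 1), (r.choose k : ZMod p) ^ 2 * k.choose j =
        (-1) ^ (r - j) * r.choose j ^ 2 := by
    intro j hj
    have hj : j ≤ r := Nat.lt_succ_iff.1 (mem_range.1 hj)
    have hflip := ZMod.natCast_choose_sub_one_sub (p := p) (a := j) (b := r - j) (by omega)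
    rw [show p - 1 - j = 2 * r - j by omega, show j + (r - j) = r by omega,
      Nat.choose_symm hj] at hflip
    rw [sq, mul_left_comm, ← hflip]
    exact_mod_cast congrArg (Nat.cast (R := ZMod p)) (Nat.sum_range_choose_sq_mul_choose hj)
  simp only [eval_chooseSqPoly]
  calc ∑ k ∈ range (r + 1), (r.choose k : ZMod p) ^ 2 * (1 - t) ^ k
      = ∑ j ∈ range (r + 1),
          (∑ k ∈ range (r + 1), (r.choose k : ZMod p) ^ 2 * k.choose j) * (-t) ^ j := by
        rw [sum_congr rfl fun k hk => by
          rw [one_sub_pow_eq_sum_range (mem_range.1 hk) t, mul_sum], sum_comm]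
        simp_rw [sum_mul, mul_assoc]
    _ = (-1) ^ r * ∑ j ∈ range (r + 1), (r.choose j : ZMod p) ^ 2 * t ^ j := by
        rw [sum_congr rfl fun j hj => by rw [hcoeff j hj], mul_sum]
        refine sum_congr rfl fun j hj => ?_
        have hsign : (-1 : ZMod p) ^ r = (-1) ^ (r - j) * (-1) ^ j := by
          rw [← pow_add, Nat.sub_add_cancel (Nat.lt_succ_iff.1 (mem_range.1 hj))]
        rw [hsign, neg_pow]
        ring

theorem sum_eval_chooseSqPoly_pow_eq_zero (hpr : p = 2 * r + 1) (hr : Odd r) {n : ℕ}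
    (hn : Odd n) : ∑ t : ZMod p, (chooseSqPoly (ZMod p) r).eval t ^ n = 0 := by
  set S := ∑ t : ZMod p, (chooseSqPoly (ZMod p) r).eval t ^ n
  have hneg : -S = S := by
    calc -S = ∑ t : ZMod p, (chooseSqPoly (ZMod p) r).eval (1 - t) ^ n := by
          simp [eval_one_sub_chooseSqPoly hpr, hr.neg_one_pow, hn.neg_pow, S]
      _ = S := (Equiv.subLeft 1).sum_comp fun t => (chooseSqPoly (ZMod p) r).eval t ^ n
  exact ((ZMod.neg_eq_self_iff S).1 hneg).resolve_right (by omega)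

theorem natCast_A₃_eq_coeff (hpr : p = 2 * r + 1) {n : ℕ} (hn : n < p) :
    (A₃ n : ZMod p) = 16 ^ n * ((chooseSqPoly (ZMod p) r) ^ 3).coeff n := by
  rw [A₃, coeff_pow_eq_sum_antidiagonalTuple, mul_sum]
  push_cast
  refine sum_congr rfl fun x hx => ?_
  have hxn : ∀ j, x j < p := fun j =>
    (single_le_sum (fun _ _ => Nat.zero_le _) (mem_univ j)).trans_lt
      ((Nat.mem_antidiagonalTuple.1 hx).symm ▸ hn)
  simp_rw [coeff_chooseSqPoly, ← Nat.centralBinom_eq_two_mul_choose,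
    ZMod.natCast_centralBinom hpr (hxn _), mul_pow, prod_mul_distrib, ← pow_mul, pow_mul',
    prod_pow_eq_pow_sum, Nat.mem_antidiagonalTuple.1 hx]
  norm_num

end

/-- For every prime `p ≡ 3 (mod 4)`, `A_3(p-1) ≡ 0 (mod p)`. -/
theorem A3_cong_zero (p : ℕ) (hp : p.Prime) (hp4 : p % 4 = 3) :
    A₃ (p - 1) ≡ 0 [MOD p] := by
  have := Fact.mk hp
  obtain ⟨r, hpr⟩ : ∃ r, p = 2 * r + 1 := ⟨p / 2, by omega⟩
  have h16 : (16 : ZMod p) ≠ 0 := by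
    rw [show (16 : ZMod p) = 2 ^ 4 by norm_num]
    exact pow_ne_zero 4 (ZMod.natCast_ne_zero_of_pos_of_lt (m := 2) (by omega) (by omega))
  have hsum := FiniteField.sum_eval_eq_neg_coeff ((chooseSqPoly (ZMod p) r) ^ 3) (by
    rw [ZMod.card]
    exact (natDegree_pow_le_of_le 3 (natDegree_chooseSqPoly_le r)).trans_lt (by omega))
  simp only [ZMod.card] at hsum
  rw [Nat.modEq_zero_iff_dvd, ← ZMod.natCast_eq_zero_iff, natCast_A₃_eq_coeff hpr (by omega),
    ZMod.pow_card_sub_one_eq_one h16, one_mul, ← neg_eq_zero, ← hsum]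
  simpa using sum_eval_chooseSqPoly_pow_eq_zero hpr (Nat.odd_iff.2 (by omega)) (n := 3) (by decide)
end
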